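/- Let a, b, t_1, t_2, … be commuting formal variables. Then in the ring of formal power series over ℤ one has the identity Σ_{p ≥ 0} Σ_{λ ⊢ 2p} #syd_CI(λ;p,p) · a^p b^p t_λ = ∏_{k=1}^∞ (1 − a^k b^k t_{2k})^{−2} · (1 − a^{2k−1} b^{2k−1} t_{2k−1}^2)^{−1}, where t_λ = t_1^{m_1} t_2^{m_2} ⋯ for λ = [1^{m_1} · 2^{m_2} ⋯] (m_i the multiplicity of i in λ), and #syd_CI(λ;p,p) = 0 unless every odd part of λ has even multiplicity. Equivalently: for all p ≥ 0 and every partition λ of 2p, #syd_CI(λ;p,p) equals the coefficient of a^p b^p t_λ in the infinite product. -/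

import Mathlib

/-!
Both sides equal `∏_{k=1}^N (m(2k) + 1)` when every odd part of `λ` has even multiplicity
(`m(i)` the multiplicity of `i`), and `0` otherwise.

A CI diagram is forced on the odd rows (half of the rows of each odd length start with `+`)
and free on the even rows: any number between `0` and `m(2k)` of the rows of length `2k` may
start with `+`, and the signature is then automatically `(p, p)`.

In the product, `t_{2k}` and `t_{2k-1}` occur only in the `k`-th factor, so the exponent of
`a^p b^p t_λ` splits over the factors in at most one way, namely as
`(a^k b^k t_{2k})^{m(2k)} (a^{2k-1} b^{2k-1} t_{2k-1}^2)^{m(2k-1)/2}` in the `k`-th factor,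
which requires `m(2k-1)` to be even. The `k`-th factor contributes the coefficient `m(2k) + 1`
of `x^{m(2k)}` in `(1 - x)^{-2}`.
-/

open Finset

/-- A signed Young diagram of shape `lam` and signature `(p, q)`, encoded by the
function `f` sending each part length `i` to the number of rows of length `i`
whose leading sign is `+`. -/
structure SYD {n : ℕ} (lam : Nat.Partition n) (p q : ℕ) : Type where
  f : ℕ → ℕ
  le_mult : ∀ i, f i ≤ Multiset.count i lam.parts
  plus_eq : ∑ i ∈ lam.parts.toFinset,
      (f i * ((i + 1) / 2) + (Multiset.count i lam.parts - f i) * (i / 2)) = p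
  minus_eq : ∑ i ∈ lam.parts.toFinset,
      (f i * (i / 2) + (Multiset.count i lam.parts - f i) * ((i + 1) / 2)) = q

abbrev Var : Type := ℕ ⊕ Bool

noncomputable def va : MvPowerSeries Var ℤ := MvPowerSeries.X (Sum.inr true)
noncomputable def vb : MvPowerSeries Var ℤ := MvPowerSeries.X (Sum.inr false)
noncomputable def vt (i : ℕ) : MvPowerSeries Var ℤ := MvPowerSeries.X (Sum.inl i)

noncomputable def geomInv (φ : MvPowerSeries Var ℤ) : MvPowerSeries Var ℤ :=
  MvPowerSeries.invOfUnit (1 - φ) 1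

noncomputable def degOf {n : ℕ} (lam : Nat.Partition n) (p q : ℕ) : Var →₀ ℕ :=
  Finsupp.single (Sum.inr true) p + Finsupp.single (Sum.inr false) q +
    ∑ i ∈ lam.parts.toFinset, Finsupp.single (Sum.inl i) (Multiset.count i lam.parts)

open MvPowerSeries

namespace MvPowerSeries

variable {σ R : Type*} [CommRing R]

theorem eq_invOfUnit_mul_of_mul_eq {φ ψ χ : MvPowerSeries σ R} {u : Rˣ}
    (hφ : constantCoeff φ = u) (h : φ * ψ = χ) : ψ = invOfUnit φ u * χ := by
  rw [← h, ← mul_assoc, invOfUnit_mul φ u hφ, one_mul]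

theorem constantCoeff_one_sub_monomial {e : σ →₀ ℕ} (he : e ≠ 0) :
    constantCoeff (1 - monomial e (1 : R)) = ((1 : Rˣ) : R) := by
  classical
  rw [map_sub, map_one, ← coeff_zero_eq_constantCoeff_apply, coeff_monomial, if_neg he.symm,
    sub_zero, Units.val_one]

theorem coeff_one_sub_monomial_mul [DecidableEq σ] (e d : σ →₀ ℕ) (φ : MvPowerSeries σ R) :
    coeff d ((1 - monomial e 1) * φ) = coeff d φ - if e ≤ d then coeff (d - e) φ else 0 := by
  rw [sub_mul, one_mul, map_sub, coeff_monomial_mul, one_mul]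

end MvPowerSeries

theorem Finsupp.exists_nsmul_eq_iff {σ : Type*} {e d : σ →₀ ℕ} :
    (∃ n : ℕ, d = n • e) ↔ d = 0 ∨ e ≤ d ∧ ∃ n : ℕ, d - e = n • e := by
  constructor
  · rintro ⟨_ | n, rfl⟩
    · simp
    · refine Or.inr ⟨?_, n, ?_⟩
      · rw [succ_nsmul]; exact le_add_self
      · rw [succ_nsmul, add_tsub_cancel_right]
  · rintro (rfl | ⟨hle, n, hn⟩)
    · exact ⟨0, by simp⟩
    · exact ⟨n + 1, by rw [succ_nsmul, ← hn, tsub_add_cancel_of_le hle]⟩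

open scoped Classical in
theorem coeff_geomInv_monomial {e : Var →₀ ℕ} (he : e ≠ 0) (d : Var →₀ ℕ) :
    coeff d (geomInv (monomial e 1)) = if ∃ n : ℕ, d = n • e then 1 else 0 := by
  set S : MvPowerSeries Var ℤ := fun d => if ∃ n : ℕ, d = n • e then 1 else 0
  suffices hS : (1 - monomial e 1) * S = 1 by
    rw [geomInv, ← mul_one (invOfUnit _ _), ← eq_invOfUnit_mul_of_mul_eq
      (constantCoeff_one_sub_monomial he) hS]
    rfl
  ext d
  rw [coeff_one_sub_monomial_mul, coeff_one]
  show (if _ then _ else _) - (if e ≤ d then (if _ then _ else _) else _) = _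
  rw [Finsupp.exists_nsmul_eq_iff]
  rcases eq_or_ne d 0 with rfl | h0
  · simp [he]
  · by_cases hle : e ≤ d <;> simp [h0, hle]

open scoped Classical in
theorem coeff_geomInv_monomial_sq {e : Var →₀ ℕ} {u : Var} (hu : e u = 1) (d : Var →₀ ℕ) :
    coeff d (geomInv (monomial e 1) ^ 2) = if ∃ n : ℕ, d = n • e then (d u : ℤ) + 1 else 0 := by
  have he : e ≠ 0 := fun h => by simp [h] at hu
  set T : MvPowerSeries Var ℤ := fun d => if ∃ n : ℕ, d = n • e then (d u : ℤ) + 1 else 0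
  suffices hT : (1 - monomial e 1) * T = geomInv (monomial e 1) by
    rw [sq]
    change coeff d (invOfUnit (1 - monomial e 1) 1 * geomInv (monomial e 1)) = _
    rw [← eq_invOfUnit_mul_of_mul_eq (constantCoeff_one_sub_monomial he) hT]
    rfl
  ext d
  rw [coeff_one_sub_monomial_mul, coeff_geomInv_monomial he]
  show (if _ then _ else _) - (if e ≤ d then (if _ then _ else _) else _) = _
  rcases eq_or_ne d 0 with rfl | h0
  · simp [he]
  by_cases hle : e ≤ d
  · have hdu : 1 ≤ d u := hu ▸ Finsupp.le_def.mp hle u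
    have hiff : (∃ n : ℕ, d = n • e) ↔ ∃ n : ℕ, d - e = n • e := by
      rw [Finsupp.exists_nsmul_eq_iff]
      simp [h0, hle]
    by_cases hd : ∃ n : ℕ, d - e = n • e
    · simp [hle, hiff, hd, hu]
      omega
    · simp [hle, hiff, hd]
  · rw [Finsupp.exists_nsmul_eq_iff]
    simp [h0, hle]

theorem Finsupp.eq_of_nsmul_add_nsmul_eq {σ : Type*} {e f : σ →₀ ℕ} {u v : σ} (heu : e u ≠ 0)
    (hfu : f u = 0) (hev : e v = 0) (hfv : f v ≠ 0) {a b n r : ℕ}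
    (h : a • e + b • f = n • e + r • f) : a = n ∧ b = r := by
  have hu := congr($h u)
  have hv := congr($h v)
  simp only [Finsupp.add_apply, Finsupp.smul_apply, smul_eq_mul, hfu, hev, mul_zero,
    add_zero, zero_add] at hu hv
  exact ⟨Nat.eq_of_mul_eq_mul_right (Nat.pos_of_ne_zero heu) hu,
    Nat.eq_of_mul_eq_mul_right (Nat.pos_of_ne_zero hfv) hv⟩

open scoped Classical in
theorem coeff_geomInv_monomial_sq_mul {e f : Var →₀ ℕ} {u v : Var} (heu : e u = 1)
    (hfu : f u = 0) (hev : e v = 0) (hfv : f v ≠ 0) (x : Var →₀ ℕ) :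
    coeff x (geomInv (monomial e 1) ^ 2 * geomInv (monomial f 1)) =
      if ∃ n r : ℕ, x = n • e + r • f then (x u : ℤ) + 1 else 0 := by
  have hf : f ≠ 0 := fun h => by simp [h] at hfv
  rw [coeff_mul]
  simp only [coeff_geomInv_monomial_sq heu, coeff_geomInv_monomial hf, ite_zero_mul_ite_zero,
    mul_one]
  by_cases hx : ∃ n r : ℕ, x = n • e + r • f
  · obtain ⟨n, r, rfl⟩ := hx
    rw [if_pos ⟨n, r, rfl⟩, Finset.sum_eq_single_of_mem (n • e, r • f) (mem_antidiagonal.mpr rfl)]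
    · rw [if_pos ⟨⟨n, rfl⟩, ⟨r, rfl⟩⟩]
      simp [heu, hfu]
    · rintro ⟨y, z⟩ hyz hne
      refine if_neg ?_
      rintro ⟨⟨a, rfl⟩, ⟨b, rfl⟩⟩
      obtain ⟨rfl, rfl⟩ := Finsupp.eq_of_nsmul_add_nsmul_eq (heu ▸ one_ne_zero) hfu hev hfv
        (mem_antidiagonal.mp hyz)
      exact hne rfl
  · rw [if_neg hx]
    refine Finset.sum_eq_zero fun q hq => if_neg ?_
    rintro ⟨⟨a, ha⟩, ⟨b, hb⟩⟩
    exact hx ⟨a, b, by rw [← mem_antidiagonal.mp hq, ha, hb]⟩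

noncomputable def evenRowExp (k : ℕ) : Var →₀ ℕ :=
  Finsupp.single (Sum.inr true) k + Finsupp.single (Sum.inr false) k +
    Finsupp.single (Sum.inl (2 * k)) 1

noncomputable def oddRowPairExp (k : ℕ) : Var →₀ ℕ :=
  Finsupp.single (Sum.inr true) (2 * k - 1) + Finsupp.single (Sum.inr false) (2 * k - 1) +
    Finsupp.single (Sum.inl (2 * k - 1)) 2

theorem monomial_evenRowExp (k : ℕ) :
    va ^ k * vb ^ k * vt (2 * k) = monomial (evenRowExp k) 1 := by
  rw [va, vb, vt, X_pow_eq, X_pow_eq, X_def, monomial_mul_monomial, monomial_mul_monomial,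
    one_mul, one_mul, evenRowExp]

theorem monomial_oddRowPairExp (k : ℕ) :
    va ^ (2 * k - 1) * vb ^ (2 * k - 1) * vt (2 * k - 1) ^ 2 =
      monomial (oddRowPairExp k) 1 := by
  rw [va, vb, vt, X_pow_eq, X_pow_eq, X_pow_eq, monomial_mul_monomial, monomial_mul_monomial,
    one_mul, one_mul, oddRowPairExp]

theorem evenRowExp_apply_inl (k i : ℕ) :
    evenRowExp k (Sum.inl i) = if 2 * k = i then 1 else 0 := by
  simp [evenRowExp, Finsupp.single_apply]

theorem oddRowPairExp_apply_inl (k i : ℕ) :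
    oddRowPairExp k (Sum.inl i) = if 2 * k - 1 = i then 2 else 0 := by
  simp [oddRowPairExp, Finsupp.single_apply]

theorem nsmul_add_nsmul_apply_inl (k n r i : ℕ) :
    (n • evenRowExp k + r • oddRowPairExp k) (Sum.inl i) =
      (if 2 * k - 1 = i then 2 * r else 0) + (if 2 * k = i then n else 0) := by
  simp only [Finsupp.add_apply, Finsupp.smul_apply, evenRowExp_apply_inl,
    oddRowPairExp_apply_inl, smul_eq_mul]
  split_ifs <;> omega

theorem nsmul_add_nsmul_apply_inr (k n r : ℕ) (b : Bool) :
    (n • evenRowExp k + r • oddRowPairExp k) (Sum.inr b) = r * (2 * k - 1) + n * k := by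
  cases b <;> simp [evenRowExp, oddRowPairExp, add_comm]

open scoped Classical in
theorem coeff_rowFactor {k : ℕ} (hk : 1 ≤ k) (x : Var →₀ ℕ) :
    coeff x (geomInv (monomial (evenRowExp k) 1) ^ 2 * geomInv (monomial (oddRowPairExp k) 1)) =
      if ∃ n r : ℕ, x = n • evenRowExp k + r • oddRowPairExp k
      then (x (Sum.inl (2 * k)) : ℤ) + 1 else 0 := by
  refine coeff_geomInv_monomial_sq_mul (v := Sum.inl (2 * k - 1)) ?_ ?_ ?_ ?_ x <;>
    simp only [evenRowExp_apply_inl, oddRowPairExp_apply_inl] <;> split_ifs <;> omega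

theorem Finset.sum_Icc_two_mul_sub_one_add {M : Type*} [AddCommMonoid M] (f : ℕ → M) (n : ℕ) :
    ∑ k ∈ Icc 1 n, (f (2 * k - 1) + f (2 * k)) = ∑ i ∈ Icc 1 (2 * n), f i := by
  induction n with
  | zero => simp
  | succ n ih =>
    rw [Finset.sum_Icc_succ_top (by omega), ih, show 2 * (n + 1) - 1 = 2 * n + 1 by omega,
      show 2 * (n + 1) = 2 * n + 1 + 1 by ring, Finset.sum_Icc_succ_top (by omega),
      Finset.sum_Icc_succ_top (by omega), ← add_assoc]

namespace Nat.Partition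

variable {n : ℕ} (lam : Nat.Partition n)

theorem toFinset_parts_subset_Icc {M : ℕ} (hM : n ≤ M) : lam.parts.toFinset ⊆ Icc 1 M := by
  intro i hi
  rw [Multiset.mem_toFinset] at hi
  exact mem_Icc.mpr ⟨lam.parts_pos hi, (lam.le_of_mem_parts hi).trans hM⟩

theorem count_parts_eq_zero_of_notMem_Icc {M i : ℕ} (hM : n ≤ M) (hi : i ∉ Icc 1 M) :
    lam.parts.count i = 0 :=
  Multiset.count_eq_zero.mpr fun h =>
    hi (lam.toFinset_parts_subset_Icc hM (Multiset.mem_toFinset.mpr h))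

theorem sum_Icc_mul_count_parts {M : ℕ} (hM : n ≤ M) :
    ∑ i ∈ Icc 1 M, i * lam.parts.count i = n := by
  refine Eq.trans ?_ lam.parts_sum
  rw [Finset.sum_multiset_count_of_subset lam.parts _ (lam.toFinset_parts_subset_Icc hM)]
  simp only [smul_eq_mul, mul_comm]

end Nat.Partition

theorem degOf_apply_inl {n : ℕ} (lam : Nat.Partition n) (p q i : ℕ) :
    degOf lam p q (Sum.inl i) = lam.parts.count i := by
  simp only [degOf, Finsupp.add_apply, Finsupp.finsetSum_apply, Finsupp.single_apply]
  simp [eq_comm (a := 0)]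

theorem degOf_apply_inr {n : ℕ} (lam : Nat.Partition n) (p : ℕ) (b : Bool) :
    degOf lam p p (Sum.inr b) = p := by
  cases b <;> simp [degOf]

noncomputable def rowDecomp (d : Var →₀ ℕ) (N : ℕ) : ℕ →₀ (Var →₀ ℕ) :=
  Finsupp.indicator (Icc 1 N) fun k _ =>
    d (Sum.inl (2 * k)) • evenRowExp k + (d (Sum.inl (2 * k - 1)) / 2) • oddRowPairExp k

theorem rowDecomp_apply {d : Var →₀ ℕ} {N k : ℕ} (hk : k ∈ Icc 1 N) :
    rowDecomp d N k =
      d (Sum.inl (2 * k)) • evenRowExp k + (d (Sum.inl (2 * k - 1)) / 2) • oddRowPairExp k :=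
  Finsupp.indicator_of_mem hk _

theorem rowDecomp_unique {d : Var →₀ ℕ} {N : ℕ} {l : ℕ →₀ (Var →₀ ℕ)}
    (hl : l ∈ finsuppAntidiag (Icc 1 N) d)
    (hspan : ∀ k ∈ Icc 1 N, ∃ n r : ℕ, l k = n • evenRowExp k + r • oddRowPairExp k)
    {k : ℕ} (hk : k ∈ Icc 1 N) :
    l k = rowDecomp d N k ∧ Even (d (Sum.inl (2 * k - 1))) := by
  have hd : ∀ i, 2 * k - 1 = i ∨ 2 * k = i → d (Sum.inl i) = l k (Sum.inl i) := by
    intro i hi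
    rw [← (mem_finsuppAntidiag.mp hl).1, Finsupp.finsetSum_apply]
    refine Finset.sum_eq_single_of_mem k hk fun k' hk' hne => ?_
    obtain ⟨n, r, hnr⟩ := hspan k' hk'
    have := mem_Icc.mp hk
    have := mem_Icc.mp hk'
    rw [hnr, nsmul_add_nsmul_apply_inl, if_neg (by omega), if_neg (by omega), add_zero]
  obtain ⟨n, r, hnr⟩ := hspan k hk
  have h1 := hd (2 * k - 1) (Or.inl rfl)
  have h2 := hd (2 * k) (Or.inr rfl)
  have := mem_Icc.mp hk
  rw [hnr, nsmul_add_nsmul_apply_inl] at h1 h2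
  simp only [↓reduceIte, if_neg (show 2 * k - 1 ≠ 2 * k by omega),
    if_neg (show 2 * k ≠ 2 * k - 1 by omega), add_zero, zero_add] at h1 h2
  rw [rowDecomp_apply hk, h1, h2, hnr, Nat.mul_div_cancel_left r two_pos]
  exact ⟨rfl, even_two_mul r⟩

open scoped Classical in
theorem coeff_prod_rowFactor (d : Var →₀ ℕ) (N : ℕ) :
    coeff d (∏ k ∈ Icc 1 N,
        geomInv (monomial (evenRowExp k) 1) ^ 2 * geomInv (monomial (oddRowPairExp k) 1)) =
      if rowDecomp d N ∈ finsuppAntidiag (Icc 1 N) d ∧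
          ∀ k ∈ Icc 1 N, Even (d (Sum.inl (2 * k - 1)))
      then ∏ k ∈ Icc 1 N, ((d (Sum.inl (2 * k)) : ℤ) + 1) else 0 := by
  rw [coeff_prod, Finset.sum_congr rfl fun l _ =>
    Finset.prod_congr rfl fun k hk => coeff_rowFactor (mem_Icc.mp hk).1 (l k)]
  have hunique : ∀ l ∈ finsuppAntidiag (Icc 1 N) d,
      (∏ k ∈ Icc 1 N, if ∃ n r : ℕ, l k = n • evenRowExp k + r • oddRowPairExp k
        then (l k (Sum.inl (2 * k)) : ℤ) + 1 else 0) ≠ 0 →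
      l = rowDecomp d N ∧ ∀ k ∈ Icc 1 N, Even (d (Sum.inl (2 * k - 1))) := by
    intro l hl hne
    have hspan : ∀ k ∈ Icc 1 N, ∃ n r : ℕ, l k = n • evenRowExp k + r • oddRowPairExp k :=
      fun k hk => by_contra fun h => Finset.prod_ne_zero_iff.mp hne k hk (if_neg h)
    refine ⟨Finsupp.ext fun k => ?_, fun k hk => (rowDecomp_unique hl hspan hk).2⟩
    by_cases hk : k ∈ Icc 1 N
    · exact (rowDecomp_unique hl hspan hk).1
    · rw [Finsupp.notMem_support_iff.mp fun h => hk ((mem_finsuppAntidiag.mp hl).2 h), rowDecomp,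
        Finsupp.indicator_of_notMem hk]
  split_ifs with h
  · rw [Finset.sum_eq_single_of_mem _ h.1 fun l hl hne =>
      by_contra fun h0 => hne (hunique l hl h0).1]
    refine Finset.prod_congr rfl fun k hk => ?_
    rw [rowDecomp_apply hk, if_pos ⟨_, _, rfl⟩, nsmul_add_nsmul_apply_inl]
    have := mem_Icc.mp hk
    simp [show 2 * k - 1 ≠ 2 * k by omega]
  · exact Finset.sum_eq_zero fun l hl => by_contra fun h0 =>
      h ⟨(hunique l hl h0).1 ▸ hl, (hunique l hl h0).2⟩

section DegOf

variable {p : ℕ} (lam : Nat.Partition (2 * p)) {N : ℕ}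

theorem sum_rowDecomp_degOf (hN : p ≤ N) (H : ∀ i, Odd i → Even (lam.parts.count i)) :
    ∑ k ∈ Icc 1 N, rowDecomp (degOf lam p p) N k = degOf lam p p := by
  have hodd : ∀ k ∈ Icc 1 N, 2 * (lam.parts.count (2 * k - 1) / 2) = lam.parts.count (2 * k - 1) :=
    fun k hk => Nat.two_mul_div_two_of_even (H _ ⟨k - 1, by have := mem_Icc.mp hk; omega⟩)
  ext (i | b)
  · rw [Finsupp.finsetSum_apply, degOf_apply_inl]
    calc ∑ k ∈ Icc 1 N, rowDecomp (degOf lam p p) N k (Sum.inl i)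
        = ∑ k ∈ Icc 1 N, ((if 2 * k - 1 = i then lam.parts.count (2 * k - 1) else 0) +
            (if 2 * k = i then lam.parts.count (2 * k) else 0)) := by
          refine Finset.sum_congr rfl fun k hk => ?_
          rw [rowDecomp_apply hk, nsmul_add_nsmul_apply_inl, degOf_apply_inl, degOf_apply_inl,
            hodd k hk]
      _ = ∑ j ∈ Icc 1 (2 * N), if j = i then lam.parts.count j else 0 :=
          Finset.sum_Icc_two_mul_sub_one_add (fun j => if j = i then lam.parts.count j else 0) N
      _ = lam.parts.count i := by
          rw [Finset.sum_ite_eq']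
          split_ifs with hi
          · rfl
          · exact (lam.count_parts_eq_zero_of_notMem_Icc (by omega) hi).symm
  · rw [Finsupp.finsetSum_apply, degOf_apply_inr]
    refine Nat.eq_of_mul_eq_mul_left two_pos ?_
    calc 2 * ∑ k ∈ Icc 1 N, rowDecomp (degOf lam p p) N k (Sum.inr b)
        = ∑ k ∈ Icc 1 N, ((2 * k - 1) * lam.parts.count (2 * k - 1) +
            2 * k * lam.parts.count (2 * k)) := by
          rw [Finset.mul_sum]
          refine Finset.sum_congr rfl fun k hk => ?_
          rw [rowDecomp_apply hk, nsmul_add_nsmul_apply_inr, degOf_apply_inl, degOf_apply_inl,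
            mul_add, ← mul_assoc, hodd k hk]
          ring
      _ = ∑ j ∈ Icc 1 (2 * N), j * lam.parts.count j :=
          Finset.sum_Icc_two_mul_sub_one_add (fun j => j * lam.parts.count j) N
      _ = 2 * p := lam.sum_Icc_mul_count_parts (by omega)

theorem rowDecomp_degOf_mem (hN : p ≤ N) (H : ∀ i, Odd i → Even (lam.parts.count i)) :
    rowDecomp (degOf lam p p) N ∈ finsuppAntidiag (Icc 1 N) (degOf lam p p) :=
  mem_finsuppAntidiag.mpr ⟨sum_rowDecomp_degOf lam hN H, Finsupp.support_indicator_subset _ _⟩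

theorem even_count_of_even_degOf (hN : p ≤ N)
    (h : ∀ k ∈ Icc 1 N, Even (degOf lam p p (Sum.inl (2 * k - 1)))) :
    ∀ i, Odd i → Even (lam.parts.count i) := by
  rintro _ ⟨j, rfl⟩
  by_cases hj : j + 1 ∈ Icc 1 N
  · have := h (j + 1) hj
    rwa [degOf_apply_inl, show 2 * (j + 1) - 1 = 2 * j + 1 by omega] at this
  · rw [lam.count_parts_eq_zero_of_notMem_Icc le_rfl (by simp at hj ⊢; omega)]
    exact Even.zero

open scoped Classical in
theorem coeff_degOf_prod_rowFactor (hN : p ≤ N) :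
    coeff (degOf lam p p) (∏ k ∈ Icc 1 N,
        geomInv (monomial (evenRowExp k) 1) ^ 2 * geomInv (monomial (oddRowPairExp k) 1)) =
      if ∀ i, Odd i → Even (lam.parts.count i)
      then ∏ k ∈ Icc 1 N, ((lam.parts.count (2 * k) : ℤ) + 1) else 0 := by
  rw [coeff_prod_rowFactor]
  simp only [degOf_apply_inl]
  congr 1
  exact propext ⟨fun h => even_count_of_even_degOf lam hN (by simpa [degOf_apply_inl] using h.2),
    fun H => ⟨rowDecomp_degOf_mem lam hN H, fun k hk => H _ ⟨k - 1, by simp at hk; omega⟩⟩⟩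

end DegOf

theorem SYD.ext {n : ℕ} {lam : Nat.Partition n} {p q : ℕ} {T T' : SYD lam p q}
    (h : T.f = T'.f) : T = T' := by
  cases T; cases T'; cases h; rfl

theorem two_mul_rowPlusBoxes_eq {i m f : ℕ} (hf : f ≤ m) (hodd : Odd i → 2 * f = m) :
    2 * (f * ((i + 1) / 2) + (m - f) * (i / 2)) = i * m := by
  obtain ⟨c, rfl⟩ := Nat.exists_eq_add_of_le hf
  rw [Nat.add_sub_cancel_left]
  rcases Nat.even_or_odd' i with ⟨j, rfl | rfl⟩
  · rw [show (2 * j + 1) / 2 = j by omega, Nat.mul_div_cancel_left j two_pos]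
    ring
  · obtain rfl : c = f := by have := hodd ⟨j, rfl⟩; omega
    rw [show (2 * j + 1 + 1) / 2 = j + 1 by omega, show (2 * j + 1) / 2 = j by omega]
    ring

section SignedDiagrams

variable {p : ℕ} (lam : Nat.Partition (2 * p)) {N : ℕ}

theorem sum_plusBoxes_eq {f : ℕ → ℕ} (hle : ∀ i, f i ≤ lam.parts.count i)
    (hodd : ∀ i, Odd i → 2 * f i = lam.parts.count i) :
    ∑ i ∈ lam.parts.toFinset,
      (f i * ((i + 1) / 2) + (lam.parts.count i - f i) * (i / 2)) = p := by
  refine Nat.eq_of_mul_eq_mul_left two_pos ?_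
  rw [Finset.mul_sum, Finset.sum_congr rfl fun i _ => two_mul_rowPlusBoxes_eq (hle i) (hodd i)]
  simpa [mul_comm] using (Finset.sum_multiset_count lam.parts).symm.trans lam.parts_sum

def SYD.ofCI {f : ℕ → ℕ} (hle : ∀ i, f i ≤ lam.parts.count i)
    (hodd : ∀ i, Odd i → 2 * f i = lam.parts.count i) : SYD lam p p where
  f := f
  le_mult := hle
  plus_eq := sum_plusBoxes_eq lam hle hodd
  minus_eq := by
    have hle' : ∀ i, lam.parts.count i - f i ≤ lam.parts.count i := fun i => Nat.sub_le _ _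
    have hodd' : ∀ i, Odd i → 2 * (lam.parts.count i - f i) = lam.parts.count i := fun i hi => by
      have := hodd i hi; omega
    refine Eq.trans (Finset.sum_congr rfl fun i _ => ?_) (sum_plusBoxes_eq lam hle' hodd')
    rw [Nat.sub_sub_self (hle i), add_comm]

def fillOfEvenChoices (g : ∀ k : Icc 1 N, Fin (lam.parts.count (2 * (k : ℕ)) + 1)) (i : ℕ) : ℕ :=
  if Odd i then lam.parts.count i / 2
  else if h : i / 2 ∈ Icc 1 N then g ⟨i / 2, h⟩ else 0

theorem fillOfEvenChoices_le (g : ∀ k : Icc 1 N, Fin (lam.parts.count (2 * (k : ℕ)) + 1)) (i : ℕ) :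
    fillOfEvenChoices lam g i ≤ lam.parts.count i := by
  unfold fillOfEvenChoices
  split_ifs with hi h
  · exact Nat.div_le_self _ _
  · calc (g ⟨i / 2, h⟩ : ℕ) ≤ lam.parts.count (2 * (i / 2)) := Nat.lt_succ_iff.mp (g _).isLt
      _ = lam.parts.count i := by rw [Nat.two_mul_div_two_of_even (Nat.not_odd_iff_even.mp hi)]
  · exact Nat.zero_le _

theorem two_mul_fillOfEvenChoices (H : ∀ i, Odd i → Even (lam.parts.count i))
    (g : ∀ k : Icc 1 N, Fin (lam.parts.count (2 * (k : ℕ)) + 1)) {i : ℕ} (hi : Odd i) :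
    2 * fillOfEvenChoices lam g i = lam.parts.count i := by
  rw [fillOfEvenChoices, if_pos hi, Nat.two_mul_div_two_of_even (H i hi)]

def sydCIEquiv (hN : p ≤ N) (H : ∀ i, Odd i → Even (lam.parts.count i)) :
    {T : SYD lam p p // ∀ i, Odd i → 2 * T.f i = lam.parts.count i} ≃
      ∀ k : Icc 1 N, Fin (lam.parts.count (2 * (k : ℕ)) + 1) where
  toFun T k := ⟨T.1.f (2 * k), Nat.lt_succ_of_le (T.1.le_mult _)⟩
  invFun g := ⟨SYD.ofCI lam (fillOfEvenChoices_le lam g)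
    (fun _ => two_mul_fillOfEvenChoices lam H g), fun _ => two_mul_fillOfEvenChoices lam H g⟩
  left_inv T := by
    refine Subtype.ext (SYD.ext (funext fun i => ?_))
    change fillOfEvenChoices lam (fun k => ⟨T.1.f (2 * k), Nat.lt_succ_of_le (T.1.le_mult _)⟩) i =
      T.1.f i
    unfold fillOfEvenChoices
    split_ifs with hi h
    · have := T.2 i hi
      omega
    · change T.1.f (2 * (i / 2)) = T.1.f i
      rw [Nat.two_mul_div_two_of_even (Nat.not_odd_iff_even.mp hi)]
    · have h0 : lam.parts.count i = 0 := lam.count_parts_eq_zero_of_notMem_Icc le_rfl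
        (by simp only [mem_Icc] at h ⊢; have := Nat.not_odd_iff_even.mp hi; grind)
      have := T.1.le_mult i
      omega
  right_inv g := by
    funext k
    ext
    have hk : 2 * (k : ℕ) / 2 = k := by omega
    have hmem : 2 * (k : ℕ) / 2 ∈ Icc 1 N := by rw [hk]; exact k.2
    change fillOfEvenChoices lam g (2 * k) = g k
    rw [fillOfEvenChoices, if_neg (by simp), dif_pos hmem,
      show (⟨2 * (k : ℕ) / 2, hmem⟩ : Icc 1 N) = k from Subtype.ext hk]

open scoped Classical in
theorem card_sydCI (hN : p ≤ N) :
    Nat.card {T : SYD lam p p // ∀ i, Odd i → 2 * T.f i = lam.parts.count i} =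
      if ∀ i, Odd i → Even (lam.parts.count i)
      then ∏ k ∈ Icc 1 N, (lam.parts.count (2 * k) + 1) else 0 := by
  split_ifs with H
  · rw [Nat.card_congr (sydCIEquiv lam hN H), Nat.card_pi]
    simp only [Nat.card_eq_fintype_card, Fintype.card_fin]
    exact Finset.prod_coe_sort (Icc 1 N) fun k => lam.parts.count (2 * k) + 1
  · push Not at H
    obtain ⟨i, hi, hodd⟩ := H
    refine Nat.card_eq_zero.mpr (Or.inl ⟨fun T => hodd ⟨T.1.f i, ?_⟩⟩)
    have := T.2 i hi
    omega

end SignedDiagrams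

/-- Generating function for the number of signed Young diagrams of type CI:
`syd_CI(λ;p,p)` consists of the signed Young diagrams `T ∈ syd(λ;p,p)` with
`m_T⁺(i) = m(i)/2` for every odd part length `i`. -/
theorem stmt2 (p : ℕ) (lam : Nat.Partition (2 * p)) (N : ℕ) (hN : 2 * p ≤ N) :
    (Nat.card {T : SYD lam p p //
        ∀ i, Odd i → 2 * T.f i = Multiset.count i lam.parts} : ℤ) =
      MvPowerSeries.coeff (R := ℤ) (degOf lam p p)
        (∏ k ∈ Finset.Icc 1 N,
          (geomInv (va ^ k * vb ^ k * vt (2 * k))) ^ 2 *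
            geomInv (va ^ (2 * k - 1) * vb ^ (2 * k - 1) * vt (2 * k - 1) ^ 2)) := by
  have hpN : p ≤ N := by omega
  simp only [monomial_evenRowExp, monomial_oddRowPairExp]
  rw [coeff_degOf_prod_rowFactor lam hpN, card_sydCI lam hpN]
  push_cast
  rfl
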